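/- Let f : 𝔽₂ⁿ → ℤ/4ℤ be a ℤ/4ℤ-valued quadratic form with associated symmetric bilinear form B, and suppose B is alternating (B(x,x) = 0 for all x) with matrix of rank r over 𝔽₂. Then r is even, say r = 2g, and there exist a linear automorphism φ of 𝔽₂ⁿ and a vector w ∈ {0,1}^n such that for all y ∈ 𝔽₂ⁿ, f(φ(y)) = 2·Σ_{j=1}^{g} ỹ_{2j−1}·ỹ_{2j} + 2·Σ_{i=1}^{n} w_i·ỹ_i computed in ℤ/4ℤ, where ỹ_i ∈ {0,1} ⊆ ℤ/4ℤ denotes the representative of the coordinate y_i ∈ 𝔽₂. -/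

import Mathlib

/-- The embedding `ℤ/2ℤ → ℤ/4ℤ` sending `0 ↦ 0` and `1 ↦ 2`. -/
def emb2 (b : ZMod 2) : ZMod 4 := 2 * (b.val : ZMod 4)

/-!
An alternating form has a symplectic basis: pick `u, v` with `B u v = 1`, adjoin them to a
basis of `u^⊥ ∩ v^⊥`, and recurse. In such a basis the Gram matrix `J` satisfies `J * J = -D`
and `J * D = J`, where `D` is the diagonal projection onto the first `2g` coordinates, so `B`
has rank `2g`. Since `B` is alternating, `f x + f x = f (x + x) = 0`, so `f` takes values in
`{0, 2}`. Hence for suitable `w` the difference between `f ∘ φ` and the claimed normal form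
vanishes on the standard basis; its polarization is zero, so it is additive and vanishes
everywhere.
-/

open Module

theorem emb2_add (a b : ZMod 2) : emb2 (a + b) = emb2 a + emb2 b := by
  revert a b; decide

theorem emb2_sum {ι : Type*} (s : Finset ι) (F : ι → ZMod 2) :
    emb2 (∑ i ∈ s, F i) = ∑ i ∈ s, emb2 (F i) :=
  map_sum (AddMonoidHom.mk' emb2 emb2_add) F s

theorem emb2_mul (a b : ZMod 2) : emb2 (a * b) = 2 * ((a.val : ZMod 4) * (b.val : ZMod 4)) := by
  revert a b; decide

theorem exists_emb2_eq_of_add_self_eq_zero {a : ZMod 4} (ha : a + a = 0) : ∃ b, emb2 b = a := by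
  revert a; decide

theorem eq_of_map_add_of_apply_single {ι G : Type*} [Finite ι] [DecidableEq ι] [AddCommGroup G]
    {p : ℕ} [NeZero p] {Q₁ Q₂ : (ι → ZMod p) → G} (P : (ι → ZMod p) → (ι → ZMod p) → G)
    (h₁ : ∀ x y, Q₁ (x + y) = Q₁ x + Q₁ y + P x y) (h₂ : ∀ x y, Q₂ (x + y) = Q₂ x + Q₂ y + P x y)
    (hsingle : ∀ i, Q₁ (Pi.single i 1) = Q₂ (Pi.single i 1)) : Q₁ = Q₂ := by
  let D : (ι → ZMod p) →+ G := AddMonoidHom.mk' (Q₁ - Q₂) fun x y => by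
    simp only [Pi.sub_apply, h₁, h₂]; abel
  have hD : D = 0 := AddMonoidHom.functions_ext _ _ _ fun i c => by
    rw [← ZMod.natCast_zmod_val c, ← nsmul_one, Pi.single_smul', map_nsmul]
    simp [D, hsingle]
  funext x
  exact sub_eq_zero.1 (DFunLike.congr_fun hD x)

theorem Fin.sum_eq_sum_pairs {M : Type*} [AddCommMonoid M] {g m : ℕ} (hg : 2 * g ≤ m)
    (F : Fin m → M) (hF : ∀ i : Fin m, 2 * g ≤ i → F i = 0) :
    ∑ i, F i = ∑ k : Fin g, (F ⟨2 * k, by omega⟩ + F ⟨2 * k + 1, by omega⟩) := by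
  let e : Fin g × Fin 2 → Fin m := fun p => ⟨2 * p.1 + p.2, by omega⟩
  have he : Function.Injective e := fun p q h => by
    simp only [e, Fin.mk.injEq] at h
    ext <;> omega
  rw [← Fintype.sum_of_injective e he _ F (fun i hi => hF i ?_) (fun _ => rfl),
    Fintype.sum_prod_type]
  · simp [e, Fin.sum_univ_two]
  · by_contra! h
    exact hi ⟨(⟨i / 2, by omega⟩, ⟨i % 2, by omega⟩), Fin.ext (by simp [e]; omega)⟩

theorem LinearMap.rank_toMatrix₂_eq_rank_toMatrix₂ {R M ι : Type*} [CommRing R] [AddCommGroup M]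
    [Module R M] [Fintype ι] [DecidableEq ι] (B : M →ₗ[R] M →ₗ[R] R) (b c : Basis ι R M) :
    (LinearMap.toMatrix₂ b b B).rank = (LinearMap.toMatrix₂ c c B).rank := by
  have h : IsUnit (b.toMatrix c).det :=
    Matrix.isUnit_det_of_left_inverse (c.toMatrix_mul_toMatrix_flip b)
  rw [← LinearMap.toMatrix₂_mul_basis_toMatrix b b c c B,
    Matrix.rank_mul_eq_left_of_isUnit_det _ _ h,
    Matrix.rank_mul_eq_right_of_isUnit_det _ _ (by rwa [Matrix.det_transpose])]

/-- The Gram matrix of a basis `e₀, f₀, …, e_{g-1}, f_{g-1}, r₀, r₁, …` with `eₖ, fₖ` in positions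
`2k, 2k + 1`, `B eₖ fₖ = 1 = -B fₖ eₖ`, and all other pairings zero. -/
def symplecticGram (K : Type*) [Ring K] (g i j : ℕ) : K :=
  if j = i + 1 ∧ i % 2 = 0 ∧ j < 2 * g then 1
  else if i = j + 1 ∧ j % 2 = 0 ∧ i < 2 * g then -1 else 0

section symplecticGram

variable {K : Type*} [Ring K] {g m : ℕ}

theorem symplecticGram_add_two_add_two (i j : ℕ) :
    symplecticGram K (g + 1) (i + 2) (j + 2) = symplecticGram K g i j := by
  unfold symplecticGram
  split_ifs <;> first | rfl | omega

theorem symplecticGram_of_le_left {i : ℕ} (hi : 2 * g ≤ i) (j : ℕ) :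
    symplecticGram K g i j = 0 := by
  rw [symplecticGram, if_neg (by omega), if_neg (by omega)]

theorem symplecticGram_of_le_right (i : ℕ) {j : ℕ} (hj : 2 * g ≤ j) :
    symplecticGram K g i j = 0 := by
  rw [symplecticGram, if_neg (by omega), if_neg (by omega)]

theorem sum_symplecticGram_two_mul_mul (hg : 2 * g ≤ m) {k : ℕ} (hk : k < g) (y : Fin m → K) :
    ∑ j : Fin m, symplecticGram K g (2 * k) j * y j = y ⟨2 * k + 1, by omega⟩ := by
  rw [Fintype.sum_eq_single ⟨2 * k + 1, by omega⟩ fun j hj => ?_]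
  · show symplecticGram K g (2 * k) (2 * k + 1) * _ = _
    rw [symplecticGram, if_pos (by omega), one_mul]
  · have hj' : j.1 ≠ 2 * k + 1 := Fin.val_ne_of_ne hj
    rw [symplecticGram, if_neg (by omega), if_neg (by omega), zero_mul]

theorem sum_symplecticGram_two_mul_add_one_mul (hg : 2 * g ≤ m) {k : ℕ} (hk : k < g)
    (y : Fin m → K) :
    ∑ j : Fin m, symplecticGram K g (2 * k + 1) j * y j = -y ⟨2 * k, by omega⟩ := by
  rw [Fintype.sum_eq_single ⟨2 * k, by omega⟩ fun j hj => ?_]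
  · show symplecticGram K g (2 * k + 1) (2 * k) * _ = _
    rw [symplecticGram, if_neg (by omega), if_pos (by omega), neg_one_mul]
  · have hj' : j.1 ≠ 2 * k := Fin.val_ne_of_ne hj
    rw [symplecticGram, if_neg (by omega), if_neg (by omega), zero_mul]

theorem symplecticGram_mul_self (hg : 2 * g ≤ m) :
    (Matrix.of fun i j : Fin m => symplecticGram K g i j) *
        Matrix.of (fun i j : Fin m => symplecticGram K g i j) =
      -Matrix.diagonal fun i : Fin m => if (i : ℕ) < 2 * g then 1 else 0 := by
  ext i l
  simp only [Matrix.mul_apply, Matrix.of_apply, Matrix.neg_apply, Matrix.diagonal_apply]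
  by_cases hi : (i : ℕ) < 2 * g
  · obtain ⟨k, hk | hk⟩ : ∃ k, (i : ℕ) = 2 * k ∨ (i : ℕ) = 2 * k + 1 := ⟨i / 2, by omega⟩
    · rw [hk, sum_symplecticGram_two_mul_mul hg (by omega), symplecticGram]
      simp only [Fin.ext_iff, hk]
      split_ifs <;> first | (exfalso; omega) | simp
    · rw [hk, sum_symplecticGram_two_mul_add_one_mul hg (by omega), symplecticGram]
      simp only [Fin.ext_iff, hk]
      split_ifs <;> first | (exfalso; omega) | simp
  · simp [symplecticGram_of_le_left (not_lt.1 hi), hi]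

end symplecticGram

theorem rank_symplecticGram {K : Type*} [Field K] {g m : ℕ} (hg : 2 * g ≤ m) :
    (Matrix.of fun i j : Fin m => symplecticGram K g i j).rank = 2 * g := by
  set J := Matrix.of fun i j : Fin m => symplecticGram K g i j
  set D := Matrix.diagonal fun i : Fin m => if (i : ℕ) < 2 * g then (1 : K) else 0
  have hD : D.rank = 2 * g := by
    classical
    rw [Matrix.rank_diagonal]
    simp [Fintype.card_subtype, Fin.card_filter_val_lt, hg]
  have hJD : J * D = J := by
    ext i j
    by_cases hj : (j : ℕ) < 2 * g
    · simp [J, D, hj]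
    · simp [J, D, hj, symplecticGram_of_le_right _ (not_lt.1 hj)]
  have hDJ : D = J * -J := by rw [Matrix.mul_neg, symplecticGram_mul_self hg, neg_neg]
  refine le_antisymm ?_ ?_
  · calc J.rank = (J * D).rank := by rw [hJD]
      _ ≤ D.rank := Matrix.rank_mul_le_right _ _
      _ = 2 * g := hD
  · calc 2 * g = D.rank := hD.symm
      _ ≤ J.rank := hDJ ▸ Matrix.rank_mul_le_left _ _

theorem LinearMap.rank_toMatrix₂_of_symplecticGram {K V : Type*} [Field K] [AddCommGroup V]
    [Module K V] {B : LinearMap.BilinForm K V} {g m : ℕ} (hg : 2 * g ≤ m)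
    {e : Basis (Fin m) K V} (he : ∀ i j, B (e i) (e j) = symplecticGram K g i j)
    (b : Basis (Fin m) K V) :
    (LinearMap.toMatrix₂ b b B).rank = 2 * g := by
  have hJ : LinearMap.toMatrix₂ e e B = Matrix.of fun i j : Fin m => symplecticGram K g i j := by
    ext i j; simp [he]
  rw [LinearMap.rank_toMatrix₂_eq_rank_toMatrix₂ B b e, hJ, rank_symplecticGram hg]

theorem apply_equivFun_symm_of_symplecticGram {K V : Type*} [CommRing K] [AddCommGroup V]
    [Module K V] {B : LinearMap.BilinForm K V} {g m : ℕ} (hg : 2 * g ≤ m)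
    {e : Basis (Fin m) K V} (he : ∀ i j, B (e i) (e j) = symplecticGram K g i j)
    (x y : Fin m → K) :
    B (e.equivFun.symm x) (e.equivFun.symm y) =
      ∑ k : Fin g, (x ⟨2 * k, by omega⟩ * y ⟨2 * k + 1, by omega⟩ -
        x ⟨2 * k + 1, by omega⟩ * y ⟨2 * k, by omega⟩) := by
  have hexpand : B (e.equivFun.symm x) (e.equivFun.symm y) =
      ∑ i, x i * ∑ j : Fin m, symplecticGram K g i j * y j := by
    simp only [Basis.equivFun_symm_apply, map_sum, map_smul, LinearMap.sum_apply,
      LinearMap.smul_apply, smul_eq_mul, he, Finset.mul_sum]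
    rw [Finset.sum_comm]
    exact Finset.sum_congr rfl fun _ _ => Finset.sum_congr rfl fun _ _ => by ring
  rw [hexpand, Fin.sum_eq_sum_pairs hg _ fun i hi => by simp [symplecticGram_of_le_left hi]]
  refine Finset.sum_congr rfl fun k _ => ?_
  rw [sum_symplecticGram_two_mul_mul hg k.2, sum_symplecticGram_two_mul_add_one_mul hg k.2]
  ring

theorem LinearMap.IsAlt.exists_basis_cons_cons {K V : Type*} [CommRing K] [AddCommGroup V]
    [Module K V] {B : LinearMap.BilinForm K V} (hB : B.IsAlt) {u v : V} (huv : B u v = 1) {n : ℕ}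
    (f : Basis (Fin n) K ↥(LinearMap.ker (B u) ⊓ LinearMap.ker (B v))) :
    ∃ e : Basis (Fin (n + 2)) K V, e 0 = u ∧ e 1 = v ∧ ∀ k, e k.succ.succ = f k := by
  have hvu : B v u = -1 := by rw [← LinearMap.IsAlt.neg hB, huv]
  have hWv : LinearMap.ker (B u) ⊓ LinearMap.ker (B v) ≤ LinearMap.ker (B v) := inf_le_right
  let f₁ := Basis.mkFinConsOfLE v (hB v) f hWv
    (fun c x hx hcx => by
      simpa [huv, LinearMap.mem_ker.1 (Submodule.mem_inf.1 hx).1] using congr_arg (B u) hcx)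
    (fun z hz => ⟨-B u z, Submodule.mem_inf.2
      ⟨by simp [huv], by simp [LinearMap.mem_ker.1 hz, hB v]⟩⟩)
  have hf₁ : ⇑f₁ = Fin.cons ⟨v, hB v⟩ (Submodule.inclusion hWv ∘ f) :=
    Basis.coe_mkFinConsOfLE _ _ _ _ _ _
  refine ⟨Basis.mkFinCons u f₁
    (fun c x hx hcx => by simpa [hvu, LinearMap.mem_ker.1 hx] using congr_arg (B v) hcx)
    (fun z => ⟨B v z, by simp [hvu]⟩), ?_, ?_, fun k => ?_⟩ <;>
  simp [hf₁, Fin.cons_one]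

theorem LinearMap.IsAlt.exists_basis_symplecticGram {K V : Type*} [Field K] [AddCommGroup V]
    [Module K V] [FiniteDimensional K V] {B : LinearMap.BilinForm K V} (hB : B.IsAlt) {m : ℕ}
    (hm : finrank K V = m) :
    ∃ g, 2 * g ≤ m ∧ ∃ e : Basis (Fin m) K V, ∀ i j, B (e i) (e j) = symplecticGram K g i j := by
  induction m using Nat.strong_induction_on generalizing V with
  | _ m ih =>
  by_cases hB0 : B = 0
  · refine ⟨0, Nat.zero_le _, Module.finBasisOfFinrankEq K V hm, fun i j => ?_⟩
    simp [hB0, symplecticGram]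
  obtain ⟨u₀, v, huv₀⟩ : ∃ u v, B u v ≠ 0 := by
    by_contra! h
    exact hB0 (LinearMap.ext₂ h)
  set u := (B u₀ v)⁻¹ • u₀
  have huv : B u v = 1 := by simp [u, huv₀]
  set W := LinearMap.ker (B u) ⊓ LinearMap.ker (B v)
  have hvW : v ∉ W := by simp [W, huv]
  have hWm : finrank K W < m := hm ▸ Submodule.finrank_lt fun h => hvW (h ▸ Submodule.mem_top)
  obtain ⟨g, hg, f, hf⟩ := ih _ hWm (B := B.compl₁₂ W.subtype W.subtype) (fun x => hB x) rfl
  obtain ⟨e, he0, he1, he2⟩ := LinearMap.IsAlt.exists_basis_cons_cons hB huv f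
  obtain rfl : finrank K W + 2 = m := by rw [← hm, finrank_eq_card_basis e, Fintype.card_fin]
  have hvu : B v u = -1 := by rw [← LinearMap.IsAlt.neg hB, huv]
  have hfu : ∀ k, B u (f k) = 0 := fun k => (Submodule.mem_inf.1 (f k).2).1
  have hfv : ∀ k, B v (f k) = 0 := fun k => (Submodule.mem_inf.1 (f k).2).2
  have huf : ∀ k, B (f k) u = 0 := fun k => by rw [← LinearMap.IsAlt.neg hB, hfu, neg_zero]
  have hvf : ∀ k, B (f k) v = 0 := fun k => by rw [← LinearMap.IsAlt.neg hB, hfv, neg_zero]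
  refine ⟨g + 1, by omega, e, fun i j => ?_⟩
  refine Fin.cases ?_ (Fin.cases ?_ fun k => ?_) i <;>
    refine Fin.cases ?_ (Fin.cases ?_ fun l => ?_) j <;>
    simp only [Fin.succ_zero_eq_one, he0, he1, he2, hB u, hB v, huv, hvu, hfu, hfv, huf, hvf]
  all_goals first
    | exact (hf _ _).trans (symplecticGram_add_two_add_two _ _).symm
    | simp [symplecticGram] <;> omega

theorem exists_apply_equivFun_symm_eq_emb2 {V : Type*} [AddCommGroup V] [Module (ZMod 2) V]
    {B : LinearMap.BilinForm (ZMod 2) V} (hB : B.IsAlt) {f : V → ZMod 4} (hf0 : f 0 = 0)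
    (hf : ∀ x y, f (x + y) = f x + f y + emb2 (B x y)) {g m : ℕ} (hg : 2 * g ≤ m)
    {e : Basis (Fin m) (ZMod 2) V} (he : ∀ i j, B (e i) (e j) = symplecticGram (ZMod 2) g i j) :
    ∃ w : Fin m → ZMod 2, ∀ y, f (e.equivFun.symm y) =
      emb2 (∑ k : Fin g, y ⟨2 * k, by omega⟩ * y ⟨2 * k + 1, by omega⟩ + ∑ i, w i * y i) := by
  have hdouble : ∀ x, f x + f x = 0 := fun x => by
    have h := hf x x
    rwa [← two_smul (ZMod 2), show (2 : ZMod 2) = 0 from rfl, zero_smul, hf0, hB,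
      show emb2 0 = 0 from rfl, add_zero, eq_comm] at h
  choose w hw using fun i => exists_emb2_eq_of_add_self_eq_zero (hdouble (e i))
  refine ⟨w, congr_fun (eq_of_map_add_of_apply_single
    (fun x y => emb2 (B (e.equivFun.symm x) (e.equivFun.symm y)))
    (fun x y => by rw [map_add, hf]) (fun x y => ?_) (fun i => ?_))⟩
  · have key : ∀ a b c d : ZMod 2, (a + c) * (b + d) = a * b + c * d + (a * d - b * c) := by
      decide
    rw [apply_equivFun_symm_of_symplecticGram hg he, ← emb2_add, ← emb2_add]
    simp only [Pi.add_apply, key]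
    simp only [mul_add, Finset.sum_add_distrib]
    congr 1
    ring
  · rw [Basis.equivFun_symm_single, ← hw, Finset.sum_eq_zero fun k _ => ?_]
    · simp [Pi.single_apply]
    · simp only [Pi.single_apply, Fin.ext_iff]
      split_ifs <;> simp_all

theorem stmt_8 (n : ℕ) (f : (Fin n → ZMod 2) → ZMod 4)
    (B : (Fin n → ZMod 2) → (Fin n → ZMod 2) → ZMod 2)
    (hsymm : ∀ x y, B x y = B y x)
    (hadd : ∀ x y z, B (x + y) z = B x z + B y z)
    (hf0 : f 0 = 0)
    (hf : ∀ x y, f (x + y) = f x + f y + emb2 (B x y))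
    (halt : ∀ x, B x x = 0)
    (M : Matrix (Fin n) (Fin n) (ZMod 2))
    (hM : ∀ i j, M i j = B (Pi.single i 1) (Pi.single j 1))
    (r : ℕ) (hr : r = M.rank) :
    ∃ g : ℕ, r = 2 * g ∧ ∃ hg : 2 * g ≤ n,
      ∃ (φ : (Fin n → ZMod 2) ≃ₗ[ZMod 2] (Fin n → ZMod 2)) (w : Fin n → Fin 2),
        ∀ y : Fin n → ZMod 2,
          f (φ y) =
            2 * (∑ j : Fin g, (((y ⟨2 * j.1, by omega⟩).val : ℕ) : ZMod 4) *
                  (((y ⟨2 * j.1 + 1, by omega⟩).val : ℕ) : ZMod 4)) +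
            2 * ∑ i : Fin n, ((w i : ℕ) : ZMod 4) * (((y i).val : ℕ) : ZMod 4) := by
  have hadd' : ∀ x y z, B x (y + z) = B x y + B x z := fun x y z => by
    rw [hsymm, hadd, hsymm y, hsymm z]
  let LB : LinearMap.BilinForm (ZMod 2) (Fin n → ZMod 2) :=
    LinearMap.mk₂ (ZMod 2) B hadd
      (fun c x y => ZMod.map_smul (AddMonoidHom.mk' (B · y) (hadd · · y)) c x) hadd'
      (fun c x y => ZMod.map_smul (AddMonoidHom.mk' (B x) (hadd' x)) c y)
  obtain ⟨g, hg, e, he⟩ :=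
    LinearMap.IsAlt.exists_basis_symplecticGram (B := LB) halt (Module.finrank_fin_fun _)
  have hM' : M = LinearMap.toMatrix₂ (Pi.basisFun _ _) (Pi.basisFun _ _) LB := by
    ext i j; simp [hM]; rfl
  obtain ⟨w, hw⟩ := exists_apply_equivFun_symm_eq_emb2 (B := LB) halt hf0 hf hg he
  refine ⟨g, by rw [hr, hM', LinearMap.rank_toMatrix₂_of_symplecticGram hg he], hg,
    e.equivFun.symm, w, fun y => ?_⟩
  rw [hw, emb2_add, emb2_sum, emb2_sum, Finset.mul_sum, Finset.mul_sum]
  simp only [emb2_mul]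
  -- `ZMod 2` is `Fin 2` by definition, and `ZMod.val` is `Fin.val` there
  rfl
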